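/- arXiv:2510.16773 — 2 statements merged into one kernel-verified Lean document; each statement's English description precedes it below -/
import Mathlib

section
/- Let F_q be a finite field with q ≡ 5 (mod 6) and d ≥ 1 with gcd(2d+1, q-1) = 1. Let X ⊂ P^{2n+1} be the hypersurface defined by Σ_{i=0}^{n} (x_{2i} + x_{2i+1})·(x_{2i}^2 − x_{2i}x_{2i+1} + x_{2i+1}^2)^d = 0. Then |X(F_q)| = (q^{2n+1} − 1)/(q − 1) = |P^{2n}(F_q)|. -/
open Finset

namespace Stmt5Aux

variable {F : Type*} [Field F] [Fintype F]

/-- The basic binary form. -/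
def gg (d : ℕ) (p : F × F) : F := (p.1 + p.2) * (p.1 ^ 2 - p.1 * p.2 + p.2 ^ 2) ^ d

/-- The full form on `2n+2` variables. -/
def S (n d : ℕ) (v : Fin (2 * n + 2) → F) : F :=
  ∑ i : Fin (n + 1), gg d (v ⟨2 * i.1, by omega⟩, v ⟨2 * i.1 + 1, by omega⟩)

lemma nat_card_sigma {ι : Type*} {β : ι → Type*} [Fintype ι] [∀ i, Finite (β i)] :
    Nat.card (Sigma β) = ∑ i, Nat.card (β i) := by
  classical
  letI : ∀ i, Fintype (β i) := fun i => Fintype.ofFinite (β i)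
  simp only [Nat.card_eq_fintype_card, Fintype.card_sigma]

lemma nat_card_option (α : Type*) [Finite α] : Nat.card (Option α) = Nat.card α + 1 := by
  letI : Fintype α := Fintype.ofFinite α
  simp [Nat.card_eq_fintype_card]

lemma three_ne_zero' (hq : Fintype.card F % 6 = 5) : (3 : F) ≠ 0 := by
  intro h
  have h3 : ringChar F ∣ 3 := ringChar.dvd (by exact_mod_cast h)
  have hp : (ringChar F).Prime := CharP.char_is_prime F (ringChar F)
  have h33 : ringChar F = 3 := (Nat.prime_dvd_prime_iff_eq hp (by norm_num)).1 h3
  haveI : CharP F 3 := h33 ▸ ringChar.charP F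
  obtain ⟨m, -, hcard⟩ := FiniteField.card F 3
  have hdvd : 3 ∣ Fintype.card F := by
    rw [hcard]; exact dvd_pow_self 3 m.pos.ne'
  omega

lemma pow_injective (m : ℕ) (hm : m ≠ 0) (h : Nat.Coprime m (Fintype.card F - 1)) :
    Function.Injective fun x : F => x ^ m := by
  classical
  intro a b hab
  simp only at hab
  rcases eq_or_ne b 0 with rfl | hb
  · rw [zero_pow hm] at hab
    exact pow_eq_zero_iff hm |>.1 hab
  have ha : a ≠ 0 := by
    intro h0
    rw [h0, zero_pow hm] at hab
    exact hb (pow_eq_zero_iff hm |>.1 hab.symm)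
  have hdiv : (a / b) ^ m = 1 := by
    rw [div_pow, hab, div_self (pow_ne_zero _ hb)]
  set u : Fˣ := Units.mk0 (a / b) (div_ne_zero ha hb) with hu
  have hum : u ^ m = 1 := by
    ext
    rw [Units.val_pow_eq_pow_val, Units.val_one, hu, Units.val_mk0, hdiv]
  have h1 : orderOf u ∣ m := orderOf_dvd_of_pow_eq_one hum
  have h2 : orderOf u ∣ Fintype.card F - 1 := by
    have := orderOf_dvd_card (x := u)
    rwa [Fintype.card_units] at this
  have : orderOf u = 1 := Nat.eq_one_of_dvd_coprimes h h1 h2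
  have hu1 : u = 1 := orderOf_eq_one_iff.1 this
  have : a / b = 1 := by
    have := congrArg Units.val hu1
    simpa [hu] using this
  field_simp at this
  exact this

lemma aniso (hq : Fintype.card F % 6 = 5) {x y : F} (h : x ^ 2 - x * y + y ^ 2 = 0) :
    x = 0 ∧ y = 0 := by
  have h3 : (3 : F) ≠ 0 := three_ne_zero' hq
  have hcop : Nat.Coprime 3 (Fintype.card F - 1) := by
    have : ¬ (3 ∣ (Fintype.card F - 1)) := by omega
    exact (Nat.Prime.coprime_iff_not_dvd (by norm_num)).2 this
  have hinj := pow_injective (F := F) 3 (by norm_num) hcop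
  have hcube : x ^ 3 = (-y) ^ 3 := by linear_combination (x + y) * h
  have hxy : x = -y := hinj hcube
  have h3y : (3 : F) * y ^ 2 = 0 := by
    rw [hxy] at h; linear_combination h
  have hy : y = 0 := by
    rcases mul_eq_zero.mp h3y with h' | h'
    · exact absurd h' h3
    · exact pow_eq_zero_iff (by norm_num) |>.1 h'
  exact ⟨by rw [hxy, hy, neg_zero], hy⟩

lemma gg_smul (d : ℕ) (t : F) (p : F × F) :
    gg d (t * p.1, t * p.2) = t ^ (2 * d + 1) * gg d p := by
  have hN : (t * p.1) ^ 2 - (t * p.1) * (t * p.2) + (t * p.2) ^ 2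
      = t ^ 2 * (p.1 ^ 2 - p.1 * p.2 + p.2 ^ 2) := by ring
  simp only [gg]
  rw [hN, mul_pow, ← pow_mul]
  ring

lemma gg_zero_iff {d : ℕ} (hd : 1 ≤ d) (hq : Fintype.card F % 6 = 5) (p : F × F) :
    gg d p = 0 ↔ p.2 = -p.1 := by
  constructor
  · intro h
    rcases mul_eq_zero.mp h with h1 | h2
    · linear_combination h1
    · have hN : p.1 ^ 2 - p.1 * p.2 + p.2 ^ 2 = 0 :=
        pow_eq_zero_iff (by omega) |>.1 h2
      obtain ⟨hx, hy⟩ := aniso hq hN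
      rw [hx, hy, neg_zero]
  · intro h
    simp [gg, h]

lemma card_fiber_zero {d : ℕ} (hd : 1 ≤ d) (hq : Fintype.card F % 6 = 5) :
    Nat.card {p : F × F // gg d p = 0} = Fintype.card F := by
  have e : {p : F × F // gg d p = 0} ≃ F :=
    { toFun := fun q => q.1.1
      invFun := fun x => ⟨(x, -x), (gg_zero_iff hd hq _).2 rfl⟩
      left_inv := fun q => Subtype.ext (by
        have := (gg_zero_iff hd hq _).1 q.2
        exact Prod.ext rfl this.symm)
      right_inv := fun x => rfl }
  rw [Nat.card_congr e, Nat.card_eq_fintype_card]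

lemma card_fiber_eq_of_ne {d : ℕ} (hgcd : Nat.Coprime (2 * d + 1) (Fintype.card F - 1))
    {c c' : F} (hc : c ≠ 0) (hc' : c' ≠ 0) :
    Nat.card {p : F × F // gg d p = c} = Nat.card {p : F × F // gg d p = c'} := by
  have hbij : Function.Bijective (fun x : F => x ^ (2 * d + 1)) :=
    (Finite.injective_iff_bijective).1 (pow_injective _ (by omega) hgcd)
  obtain ⟨t, ht⟩ := hbij.2 (c' / c)
  simp only at ht
  have htne : t ≠ 0 := by
    intro h0; rw [h0, zero_pow (by omega)] at ht
    exact hc' (by field_simp at ht; simpa using ht.symm)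
  refine Nat.card_congr ⟨fun p => ⟨(t * p.1.1, t * p.1.2), ?_⟩,
    fun p => ⟨(t⁻¹ * p.1.1, t⁻¹ * p.1.2), ?_⟩, fun p => ?_, fun p => ?_⟩
  · rw [show ((t * p.1.1, t * p.1.2) : F × F) = (t * (p.1.1, p.1.2).1, t * (p.1.1, p.1.2).2) from rfl,
      gg_smul, ht]
    rw [show ((p.1.1, p.1.2) : F × F) = p.1 from rfl, p.2]
    field_simp
  · rw [show ((t⁻¹ * p.1.1, t⁻¹ * p.1.2) : F × F) = (t⁻¹ * (p.1.1, p.1.2).1, t⁻¹ * (p.1.1, p.1.2).2) from rfl,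
      gg_smul]
    rw [show ((p.1.1, p.1.2) : F × F) = p.1 from rfl, p.2, inv_pow, ht]
    field_simp
  · apply Subtype.ext
    apply Prod.ext <;> simp [htne, mul_assoc, inv_mul_cancel₀]
  · apply Subtype.ext
    apply Prod.ext <;> simp [htne, mul_assoc, mul_inv_cancel₀]

lemma card_fiber {d : ℕ} (hd : 1 ≤ d) (hq : Fintype.card F % 6 = 5)
    (hgcd : Nat.Coprime (2 * d + 1) (Fintype.card F - 1)) (c : F) :
    Nat.card {p : F × F // gg d p = c} = Fintype.card F := by
  classical
  set q := Fintype.card F with hqq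
  have hq2 : 2 ≤ q := by omega
  have htot : ∑ c : F, Nat.card {p : F × F // gg d p = c} = q ^ 2 := by
    rw [← nat_card_sigma, Nat.card_congr (Equiv.sigmaFiberEquiv (gg d)),
      Nat.card_eq_fintype_card, Fintype.card_prod, sq]
  have hsplit : ∑ c : F, Nat.card {p : F × F // gg d p = c}
      = Nat.card {p : F × F // gg d p = 0}
        + ∑ c ∈ Finset.univ.erase 0, Nat.card {p : F × F // gg d p = c} :=
    (Finset.add_sum_erase _ _ (mem_univ 0)).symm
  have herase : ∀ c' ∈ Finset.univ.erase (0 : F),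
      Nat.card {p : F × F // gg d p = c'} = Nat.card {p : F × F // gg d p = (1 : F)} := by
    intro c' hc'
    exact card_fiber_eq_of_ne hgcd (Finset.mem_erase.1 hc').1 one_ne_zero
  set N1 := Nat.card {p : F × F // gg d p = (1 : F)} with hN1
  have hcount : q + (q - 1) * N1 = q ^ 2 := by
    rw [← htot, hsplit, card_fiber_zero hd hq, Finset.sum_congr rfl herase,
      Finset.sum_const, Finset.card_erase_of_mem (mem_univ 0), Finset.card_univ, smul_eq_mul]
  have expand : q ^ 2 = q + (q - 1) * q := by
    obtain ⟨k, hk⟩ : ∃ k, q = k + 1 := ⟨q - 1, by omega⟩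
    rw [hk]; simp only [Nat.add_sub_cancel]; ring
  have hkey : (q - 1) * N1 = (q - 1) * q := by linarith [hcount, expand]
  have hN1q : N1 = q := Nat.eq_of_mul_eq_mul_left (by omega) hkey
  rcases eq_or_ne c 0 with rfl | hc
  · exact card_fiber_zero hd hq
  · rw [card_fiber_eq_of_ne hgcd hc one_ne_zero, ← hN1, hN1q]

lemma card_sum_fiber {d : ℕ} (hd : 1 ≤ d) (hq : Fintype.card F % 6 = 5)
    (hgcd : Nat.Coprime (2 * d + 1) (Fintype.card F - 1)) :
    ∀ (m : ℕ) (c : F),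
      Nat.card {w : Fin (m + 1) → F × F // ∑ i, gg d (w i) = c}
        = Fintype.card F ^ (2 * m + 1)
  | 0, c => by
    have e : {w : Fin 1 → F × F // ∑ i, gg d (w i) = c} ≃ {p : F × F // gg d p = c} :=
      Equiv.subtypeEquiv (Equiv.funUnique (Fin 1) (F × F)) (by
        intro w
        simp [Fin.sum_univ_one, Equiv.funUnique])
    rw [Nat.card_congr e, card_fiber hd hq hgcd]
    norm_num
  | (m + 1), c => by
    have key : Nat.card (Σ p : F × F, {w' : Fin (m + 1) → F × F // ∑ i, gg d (w' i) = c - gg d p})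
        = Nat.card {w : Fin (m + 2) → F × F // ∑ i, gg d (w i) = c} := by
      refine Nat.card_eq_of_bijective
        (fun x => ⟨Fin.cons x.1 x.2.1, ?_⟩) ⟨?_, ?_⟩
      · rw [Fin.sum_univ_succ]
        rw [show (Fin.cons x.1 x.2.1 : Fin (m+2) → F × F) 0 = x.1 from Fin.cons_zero _ _]
        rw [show (∑ i : Fin (m+1), gg d ((Fin.cons x.1 x.2.1 : Fin (m+2) → F × F) i.succ))
            = ∑ i, gg d (x.2.1 i) from by
          refine Finset.sum_congr rfl fun i _ => ?_
          rw [Fin.cons_succ]]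
        rw [x.2.2]; ring
      · rintro ⟨p, u, hu⟩ ⟨p', u', hu'⟩ h
        have hv : (Fin.cons p u : Fin (m+2) → F × F) = Fin.cons p' u' := by exact congrArg Subtype.val h
        have hp : p = p' := by
          have := congrFun hv 0
          rwa [Fin.cons_zero, Fin.cons_zero] at this
        subst hp
        have hu2 : u = u' := by
          have := congrArg Fin.tail hv
          rwa [Fin.tail_cons, Fin.tail_cons] at this
        subst hu2
        rfl
      · rintro ⟨w, hw⟩
        refine ⟨⟨w 0, ⟨Fin.tail w, ?_⟩⟩, ?_⟩
        · rw [Fin.sum_univ_succ] at hw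
          rw [show (∑ i, gg d (Fin.tail w i)) = ∑ i : Fin (m + 1), gg d (w i.succ) from rfl]
          linear_combination hw
        · exact Subtype.ext (Fin.cons_self_tail w)
    rw [← key, nat_card_sigma]
    have : ∀ p : F × F,
        Nat.card {w' : Fin (m + 1) → F × F // ∑ i, gg d (w' i) = c - gg d p}
          = Fintype.card F ^ (2 * m + 1) := fun p => card_sum_fiber hd hq hgcd m _
    rw [Finset.sum_congr rfl fun p _ => this p, Finset.sum_const, Finset.card_univ,
      Fintype.card_prod, smul_eq_mul]
    ring

end Stmt5Aux

/-- For `q ≡ 5 (mod 6)` and `gcd(2d+1, q-1) = 1`, the hypersurface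
`Σ_{i=0}^{n} (x_{2i}+x_{2i+1})·(x_{2i}^2 − x_{2i}x_{2i+1} + x_{2i+1}^2)^d = 0`
in `P^{2n+1}` over `F_q` has exactly `(q^{2n+1}-1)/(q-1) = |P^{2n}(F_q)|` points. -/
theorem stmt_5 (F : Type*) [Field F] [Fintype F] (n d : ℕ) (hd : 1 ≤ d)
    (hq : Fintype.card F % 6 = 5)
    (hgcd : Nat.gcd (2 * d + 1) (Fintype.card F - 1) = 1) :
    Nat.card {x : Projectivization F (Fin (2 * n + 2) → F) //
        ∑ i : Fin (n + 1),
          (x.rep ⟨2 * i.1, by omega⟩ + x.rep ⟨2 * i.1 + 1, by omega⟩) *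
            (x.rep ⟨2 * i.1, by omega⟩ ^ 2
              - x.rep ⟨2 * i.1, by omega⟩ * x.rep ⟨2 * i.1 + 1, by omega⟩
              + x.rep ⟨2 * i.1 + 1, by omega⟩ ^ 2) ^ d = 0}
      = (Fintype.card F ^ (2 * n + 1) - 1) / (Fintype.card F - 1) := by
  classical
  have hq5 : 5 ≤ Fintype.card F := by omega
  -- reindexing equivalence
  let E : (Fin (2 * n + 2) → F) ≃ (Fin (n + 1) → F × F) :=
  { toFun := fun v i => (v ⟨2 * i.1, by omega⟩, v ⟨2 * i.1 + 1, by omega⟩)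
    invFun := fun w j =>
      if h : j.1 % 2 = 0 then (w ⟨j.1 / 2, by omega⟩).1 else (w ⟨j.1 / 2, by omega⟩).2
    left_inv := fun v => funext fun j => by
      by_cases h : j.1 % 2 = 0
      · simp only [dif_pos h]
        have hj : (⟨2 * (j.1 / 2), by omega⟩ : Fin (2 * n + 2)) = j :=
          Fin.ext (show 2 * (j.1 / 2) = j.1 by omega)
        rw [hj]
      · simp only [dif_neg h]
        have hj : (⟨2 * (j.1 / 2) + 1, by omega⟩ : Fin (2 * n + 2)) = j :=
          Fin.ext (show 2 * (j.1 / 2) + 1 = j.1 by omega)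
        rw [hj]
    right_inv := fun w => funext fun i => by
      dsimp only
      refine Prod.ext ?_ ?_
      · rw [dif_pos (by omega : 2 * i.1 % 2 = 0)]
        have hi : (⟨2 * i.1 / 2, by omega⟩ : Fin (n + 1)) = i :=
          Fin.ext (show 2 * i.1 / 2 = i.1 by omega)
        rw [hi]
      · rw [dif_neg (by omega : ¬ (2 * i.1 + 1) % 2 = 0)]
        have hi : (⟨(2 * i.1 + 1) / 2, by omega⟩ : Fin (n + 1)) = i :=
          Fin.ext (show (2 * i.1 + 1) / 2 = i.1 by omega)
        rw [hi] }
  have compat : ∀ v : Fin (2 * n + 2) → F,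
      Stmt5Aux.S n d v = ∑ i, Stmt5Aux.gg d (E v i) := fun v => rfl
  have affine : Nat.card {v : Fin (2 * n + 2) → F // Stmt5Aux.S n d v = 0}
      = Fintype.card F ^ (2 * n + 1) := by
    have e2 : {v : Fin (2 * n + 2) → F // Stmt5Aux.S n d v = 0}
        ≃ {w : Fin (n + 1) → F × F // ∑ i, Stmt5Aux.gg d (w i) = 0} :=
      Equiv.subtypeEquiv E (fun v => by rw [compat v])
    rw [Nat.card_congr e2, Stmt5Aux.card_sum_fiber hd hq hgcd n 0]
  have hS0 : Stmt5Aux.S n d (0 : Fin (2 * n + 2) → F) = 0 := by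
    simp [Stmt5Aux.S, Stmt5Aux.gg]
  have hsmul : ∀ (t : F) (v : Fin (2 * n + 2) → F),
      Stmt5Aux.S n d (t • v) = t ^ (2 * d + 1) * Stmt5Aux.S n d v := by
    intro t v
    simp only [Stmt5Aux.S, Finset.mul_sum]
    refine Finset.sum_congr rfl fun i _ => ?_
    have := Stmt5Aux.gg_smul (F := F) d t
      (v ⟨2 * i.1, by omega⟩, v ⟨2 * i.1 + 1, by omega⟩)
    simpa [Pi.smul_apply, smul_eq_mul] using this
  have hA : Nat.card {v : Fin (2 * n + 2) → F // v ≠ 0 ∧ Stmt5Aux.S n d v = 0}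
      = Fintype.card F ^ (2 * n + 1) - 1 := by
    have eopt : {v : Fin (2 * n + 2) → F // Stmt5Aux.S n d v = 0}
        ≃ Option {v : Fin (2 * n + 2) → F // v ≠ 0 ∧ Stmt5Aux.S n d v = 0} :=
    { toFun := fun v => if h : v.1 = 0 then none else some ⟨v.1, h, v.2⟩
      invFun := fun o => o.elim ⟨0, hS0⟩ (fun a => ⟨a.1, a.2.2⟩)
      left_inv := fun v => by
        dsimp only
        by_cases h : v.1 = 0
        · rw [dif_pos h]; exact Subtype.ext h.symm
        · rw [dif_neg h]
          rfl
      right_inv := fun o => by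
        cases o with
        | none => simp
        | some a =>
          dsimp only [Option.elim]
          rw [dif_neg a.2.1] }
    have hcnt := Nat.card_congr eopt
    rw [affine, Stmt5Aux.nat_card_option] at hcnt
    omega
  have hX : Nat.card {v : Fin (2 * n + 2) → F // v ≠ 0 ∧ Stmt5Aux.S n d v = 0}
      = Nat.card {x : Projectivization F (Fin (2 * n + 2) → F) // Stmt5Aux.S n d x.rep = 0}
        * (Fintype.card F - 1) := by
    have hbij : Function.Bijective
        (fun y : {x : Projectivization F (Fin (2 * n + 2) → F) //
            Stmt5Aux.S n d x.rep = 0} × Fˣ =>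
          (⟨(y.2 : F) • y.1.1.rep,
            smul_ne_zero (Units.ne_zero y.2) (Projectivization.rep_nonzero y.1.1),
            by rw [hsmul, y.1.2, mul_zero]⟩ :
            {v : Fin (2 * n + 2) → F // v ≠ 0 ∧ Stmt5Aux.S n d v = 0})) := by
      constructor
      · rintro ⟨⟨x, hx⟩, c⟩ ⟨⟨x', hx'⟩, c'⟩ h
        have hv : (c : F) • x.rep = (c' : F) • x'.rep := by exact congrArg Subtype.val h
        have hne : (c : F) • x.rep ≠ 0 :=
          smul_ne_zero c.ne_zero (Projectivization.rep_nonzero x)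
        have hne' : (c' : F) • x'.rep ≠ 0 :=
          smul_ne_zero c'.ne_zero (Projectivization.rep_nonzero x')
        have hxx : x = x' := by
          calc x = Projectivization.mk F x.rep (Projectivization.rep_nonzero x) :=
                (Projectivization.mk_rep x).symm
          _ = Projectivization.mk F ((c : F) • x.rep) hne := by
              rw [Projectivization.mk_eq_mk_iff']
              exact ⟨(c : F)⁻¹, by rw [smul_smul, inv_mul_cancel₀ c.ne_zero, one_smul]⟩
          _ = Projectivization.mk F ((c' : F) • x'.rep) hne' := by
              rw [Projectivization.mk_eq_mk_iff']
              exact ⟨1, by rw [one_smul, hv]⟩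
          _ = Projectivization.mk F x'.rep (Projectivization.rep_nonzero x') := by
              rw [Projectivization.mk_eq_mk_iff']
              exact ⟨(c' : F), rfl⟩
          _ = x' := Projectivization.mk_rep x'
        subst hxx
        have hcc : (c : F) = (c' : F) := by
          have h0 : ((c : F) - (c' : F)) • x.rep = 0 := by
            rw [sub_smul, hv, sub_self]
          rcases smul_eq_zero.mp h0 with h' | h'
          · exact sub_eq_zero.mp h'
          · exact absurd h' (Projectivization.rep_nonzero x)
        have hcc' : c = c' := Units.ext hcc
        subst hcc'
        rfl
      · rintro ⟨v, hv0, hvS⟩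
        obtain ⟨a, ha⟩ := Projectivization.exists_smul_eq_mk_rep F v hv0
        have hrep : (Projectivization.mk F v hv0).rep = (a : F) • v := by
          rw [← ha, Units.smul_def]
        have hxS : Stmt5Aux.S n d (Projectivization.mk F v hv0).rep = 0 := by
          rw [hrep, hsmul, hvS, mul_zero]
        refine ⟨⟨⟨Projectivization.mk F v hv0, hxS⟩, a⁻¹⟩, ?_⟩
        apply Subtype.ext
        show ((a⁻¹ : Fˣ) : F) • (Projectivization.mk F v hv0).rep = v
        rw [hrep, smul_smul, Units.val_inv_eq_inv_val,
          inv_mul_cancel₀ (Units.ne_zero a), one_smul]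
    have hcard := Nat.card_eq_of_bijective _ hbij
    rw [Nat.card_prod, Nat.card_eq_fintype_card (α := Fˣ), Fintype.card_units] at hcard
    exact hcard.symm
  have heq : Fintype.card F ^ (2 * n + 1) - 1
      = Nat.card {x : Projectivization F (Fin (2 * n + 2) → F) //
          Stmt5Aux.S n d x.rep = 0} * (Fintype.card F - 1) := hA.symm.trans hX
  have final : Nat.card {x : Projectivization F (Fin (2 * n + 2) → F) //
      Stmt5Aux.S n d x.rep = 0}
      = (Fintype.card F ^ (2 * n + 1) - 1) / (Fintype.card F - 1) :=
    (Nat.div_eq_of_eq_mul_left (by omega) heq).symm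
  exact final
end

section
/- Let F_q be a finite field of characteristic 3, d ≥ 1, and write 2d+1 = g·3^t with 3 ∤ g; set s' = gcd(g, q−1). Then the surface X ⊂ P^3 over F_q defined by (x_0+x_1)(x_0^2 − x_0x_1 + x_1^2)^d + (x_2+x_3)(x_2^2 − x_2x_3 + x_3^2)^d = 0 satisfies |X(F_q)| = s'·q^2 + q + 1. -/
open Projectivization
open scoped LinearAlgebra.Projectivization

lemma aux_card_pow_eq_one (G : Type*) [Group G] [Fintype G] [IsCyclic G]
    {n : ℕ} (hn : 0 < n) :
    Nat.card {x : G // x ^ n = 1} = Nat.gcd n (Fintype.card G) := by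
  classical
  set m := Fintype.card G with hm
  set d := Nat.gcd n m with hd
  have hm0 : 0 < m := Fintype.card_pos
  have hdm : d ∣ m := Nat.gcd_dvd_right n m
  have hd0 : 0 < d := Nat.gcd_pos_of_pos_left m hn
  have hiff : ∀ x : G, x ^ n = 1 ↔ x ^ d = 1 := fun x => by
    rw [hd, pow_gcd_eq_one, hm, pow_card_eq_one]
    simp
  rw [Nat.card_congr (Equiv.subtypeEquivRight hiff)]
  have upper : Nat.card {x : G // x ^ d = 1} ≤ d := by
    rw [Nat.card_eq_fintype_card, Fintype.card_subtype]
    exact IsCyclic.card_pow_eq_one_le hd0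
  have lower : d ≤ Nat.card {x : G // x ^ d = 1} := by
    obtain ⟨ζ, hζ⟩ := IsCyclic.exists_generator (α := G)
    have hord : orderOf ζ = m := by
      rw [orderOf_eq_card_of_forall_mem_zpowers hζ, Nat.card_eq_fintype_card]
    set h := ζ ^ (m / d) with hh
    have hordh : orderOf h = d := by
      rw [hh, orderOf_pow, hord, Nat.gcd_eq_right (Nat.div_dvd_of_dvd hdm),
        Nat.div_div_self hdm hm0.ne']
    have hd1 : h ^ d = 1 := by rw [← hordh]; exact pow_orderOf_eq_one h
    have : Function.Injective
        (fun y : {y : G // y ∈ Subgroup.zpowers h} =>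
          (⟨y.1, by
            obtain ⟨k, hk⟩ := y.2
            simp only [← hk]
            rw [← zpow_natCast, ← zpow_mul, mul_comm, zpow_mul, zpow_natCast, hd1, one_zpow]⟩ :
            {x : G // x ^ d = 1})) := by
      intro a b hab
      apply Subtype.ext
      simpa using congrArg Subtype.val hab
    calc d = Nat.card {y : G // y ∈ Subgroup.zpowers h} := (Nat.card_zpowers h ▸ hordh).symm
    _ ≤ _ := Nat.card_le_card_of_injective _ this
  omega

lemma aux_card_roots (F : Type*) [Field F] [Fintype F] {n : ℕ} (hn : 0 < n) :
    Nat.card {x : F // x ^ n = 1} = Nat.gcd n (Fintype.card F - 1) := by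
  classical
  have h1 : Nat.card {x : Fˣ // x ^ n = 1} = Nat.gcd n (Fintype.card F - 1) := by
    rw [aux_card_pow_eq_one Fˣ hn, Fintype.card_units]
  rw [← h1]
  apply Nat.card_congr
  refine Equiv.symm ?_
  refine Equiv.ofBijective (fun x => ⟨(x.1 : F), by
    have := x.2
    calc (x.1 : F) ^ n = ((x.1 ^ n : Fˣ) : F) := by push_cast; ring
    _ = 1 := by rw [this]; rfl⟩) ⟨?_, ?_⟩
  · intro a b hab
    exact Subtype.ext (Units.ext (congrArg Subtype.val hab))
  · rintro ⟨x, hx⟩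
    have hx0 : x ≠ 0 := by
      intro h; rw [h, zero_pow hn.ne'] at hx; exact one_ne_zero hx.symm
    exact ⟨⟨Units.mk0 x hx0, Units.ext (by push_cast; simpa using hx)⟩, rfl⟩

lemma aux_eqn (F : Type*) [Field F] [CharP F 3] (d g t : ℕ)
    (hfact : 2 * d + 1 = g * 3 ^ t) (a b c e : F) :
    (a + b) * (a ^ 2 - a * b + b ^ 2) ^ d + (c + e) * (c ^ 2 - c * e + e ^ 2) ^ d = 0
      ↔ (a + b) ^ g + (c + e) ^ g = 0 := by
  haveI : Fact (Nat.Prime 3) := ⟨by norm_num⟩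
  have h3 : (3 : F) = 0 := by exact_mod_cast CharP.cast_eq_zero F 3
  have key : ∀ x y : F, x ^ 2 - x * y + y ^ 2 = (x + y) ^ 2 := fun x y => by
    linear_combination (-(x * y)) * h3
  have lhs : (a + b) * (a ^ 2 - a * b + b ^ 2) ^ d + (c + e) * (c ^ 2 - c * e + e ^ 2) ^ d
      = ((a + b) ^ g + (c + e) ^ g) ^ 3 ^ t := by
    rw [key, key, ← pow_mul, ← pow_mul, ← pow_succ' (a + b), ← pow_succ' (c + e)]
    rw [show 2 * d + 1 = g * 3 ^ t from hfact, pow_mul, pow_mul]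
    rw [add_pow_char_pow]
  rw [lhs, pow_eq_zero_iff (by positivity : (3 : ℕ) ^ t ≠ 0)]

lemma aux_ne_zero_card (F : Type*) [Field F] [Fintype F] :
    Nat.card {b : F // b ≠ 0} = Fintype.card F - 1 := by
  classical
  rw [← Nat.card_congr (unitsEquivNeZero (G₀ := F)), Nat.card_eq_fintype_card,
    Fintype.card_units]

lemma aux_pairs (F : Type*) [Field F] [Fintype F] {g : ℕ} (hg1 : 0 < g) (godd : Odd g) :
    Nat.card {p : F × F // p.1 ^ g + p.2 ^ g = 0}
      = 1 + (Fintype.card F - 1) * Nat.gcd g (Fintype.card F - 1) := by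
  classical
  set α := {p : F × F // p.1 ^ g + p.2 ^ g = 0} with hα
  have hsplit : Nat.card α
      = Nat.card {s : α // s.1.2 = 0} + Nat.card {s : α // ¬ s.1.2 = 0} := by
    rw [← Nat.card_sum]
    exact (Nat.card_congr (Equiv.sumCompl (fun s : α => s.1.2 = 0))).symm
  have hzero : Nat.card {s : α // s.1.2 = 0} = 1 := by
    rw [Nat.card_eq_one_iff_unique]
    constructor
    · constructor
      rintro ⟨⟨⟨a, b⟩, hab⟩, h0⟩ ⟨⟨⟨a', b'⟩, hab'⟩, h0'⟩
      simp only at h0 h0'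
      subst h0; subst h0'
      rw [zero_pow hg1.ne', add_zero, pow_eq_zero_iff hg1.ne'] at hab hab'
      subst hab; subst hab'
      rfl
    · exact ⟨⟨⟨(0, 0), by simp [zero_pow hg1.ne']⟩, rfl⟩⟩
  have hne : Nat.card {s : α // ¬ s.1.2 = 0}
      = Nat.gcd g (Fintype.card F - 1) * (Fintype.card F - 1) := by
    have e : {w : F // w ^ g = 1} × {b : F // b ≠ 0} ≃ {s : α // ¬ s.1.2 = 0} := by
      refine Equiv.ofBijective (fun wb => ⟨⟨(wb.1.1 * (-wb.2.1), wb.2.1), by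
        have hw := wb.1.2
        have : (-wb.2.1) ^ g = -(wb.2.1 ^ g) := Odd.neg_pow godd _
        simp only [mul_pow, hw, one_mul, this]
        ring⟩, wb.2.2⟩) ⟨?_, ?_⟩
      · rintro ⟨⟨w, hw⟩, ⟨b, hb⟩⟩ ⟨⟨w', hw'⟩, ⟨b', hb'⟩⟩ h
        have h1 := congrArg (fun s : {s : α // ¬ s.1.2 = 0} => s.1.1) h
        simp only [Prod.mk.injEq] at h1
        obtain ⟨hww, hbb⟩ := h1
        subst hbb
        have : w = w' := by
          have hnb : (-b : F) ≠ 0 := neg_ne_zero.mpr hb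
          exact mul_right_cancel₀ hnb hww
        subst this; rfl
      · rintro ⟨⟨⟨a, b⟩, hab⟩, hb⟩
        simp only at hb
        have hnb : (-b : F) ≠ 0 := neg_ne_zero.mpr hb
        have hbg : (-b : F) ^ g ≠ 0 := pow_ne_zero _ hnb
        have hag : a ^ g = (-b) ^ g := by
          rw [Odd.neg_pow godd]
          have h' : a ^ g + b ^ g = 0 := hab
          linear_combination h'
        refine ⟨⟨⟨a * (-b)⁻¹, by
          rw [mul_pow, hag, ← mul_pow, mul_inv_cancel₀ hnb, one_pow]⟩, ⟨b, hb⟩⟩, ?_⟩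
        apply Subtype.ext
        apply Subtype.ext
        simp only
        rw [mul_assoc, inv_mul_cancel₀ hnb, mul_one]
    rw [← Nat.card_congr e, Nat.card_prod, aux_card_roots F hg1, aux_ne_zero_card]
  rw [hsplit, hzero, hne, Nat.mul_comm]

lemma aux_proj (F : Type*) [Field F] [Fintype F] (P : (Fin 4 → F) → Prop)
    (hP : ∀ (c : F), c ≠ 0 → ∀ v, P (c • v) ↔ P v) :
    Nat.card {v : Fin 4 → F // P v ∧ v ≠ 0}
      = Nat.card {x : ℙ F (Fin 4 → F) // P x.rep} * (Fintype.card F - 1) := by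
  classical
  have e : {x : ℙ F (Fin 4 → F) // P x.rep} × {c : F // c ≠ 0}
      ≃ {v : Fin 4 → F // P v ∧ v ≠ 0} := by
    refine Equiv.ofBijective (fun xc => ⟨xc.2.1 • xc.1.1.rep,
      ⟨(hP xc.2.1 xc.2.2 _).2 xc.1.2, smul_ne_zero xc.2.2 xc.1.1.rep_nonzero⟩⟩) ⟨?_, ?_⟩
    · rintro ⟨⟨x, hx⟩, ⟨c, hc⟩⟩ ⟨⟨y, hy⟩, ⟨c', hc'⟩⟩ h
      have h1 : c • x.rep = c' • y.rep := congrArg Subtype.val h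
      have hxy : x = y := by
        have hcx : c • x.rep ≠ 0 := smul_ne_zero hc x.rep_nonzero
        have h2 : Projectivization.mk F (c • x.rep) hcx
            = Projectivization.mk F x.rep x.rep_nonzero :=
          (mk_eq_mk_iff' F _ _ hcx x.rep_nonzero).2 ⟨c, rfl⟩
        have h3 : Projectivization.mk F (c • x.rep) hcx
            = Projectivization.mk F y.rep y.rep_nonzero :=
          (mk_eq_mk_iff' F _ _ hcx y.rep_nonzero).2 ⟨c', h1.symm⟩
        rw [mk_rep] at h2
        rw [mk_rep] at h3
        exact h2.symm.trans h3
      subst hxy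
      have hcc : c = c' := by
        by_contra hne
        have : (c - c') • x.rep = 0 := by rw [sub_smul, h1, sub_self]
        rcases smul_eq_zero.mp this with h | h
        · exact hne (sub_eq_zero.mp h)
        · exact x.rep_nonzero h
      subst hcc; rfl
    · rintro ⟨v, hv, hv0⟩
      obtain ⟨a, ha⟩ := exists_smul_eq_mk_rep F v hv0
      have hrep : (Projectivization.mk F v hv0).rep = (a : F) • v := by
        rw [← ha]; rfl
      have hPrep : P (Projectivization.mk F v hv0).rep := by
        rw [hrep]
        exact (hP (a : F) a.ne_zero v).2 hv
      refine ⟨⟨⟨Projectivization.mk F v hv0, hPrep⟩, ⟨(a : F)⁻¹, inv_ne_zero a.ne_zero⟩⟩, ?_⟩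
      apply Subtype.ext
      simp only
      rw [hrep, inv_smul_smul₀ a.ne_zero]
  rw [← Nat.card_congr e, Nat.card_prod]
  congr 1
  rw [← Nat.card_congr (unitsEquivNeZero (G₀ := F)), Nat.card_eq_fintype_card,
    Fintype.card_units]

lemma aux_vec (F : Type*) [Field F] [Fintype F] (g : ℕ) :
    Nat.card {v : Fin 4 → F // (v 0 + v 1) ^ g + (v 2 + v 3) ^ g = 0}
      = Nat.card {p : F × F // p.1 ^ g + p.2 ^ g = 0} * Fintype.card F ^ 2 := by
  classical
  have e : {v : Fin 4 → F // (v 0 + v 1) ^ g + (v 2 + v 3) ^ g = 0}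
      ≃ {p : F × F // p.1 ^ g + p.2 ^ g = 0} × (F × F) :=
    { toFun := fun v => (⟨(v.1 0 + v.1 1, v.1 2 + v.1 3), v.2⟩, (v.1 1, v.1 3))
      invFun := fun pc => ⟨![pc.1.1.1 - pc.2.1, pc.2.1, pc.1.1.2 - pc.2.2, pc.2.2], by
        have := pc.1.2
        simpa using this⟩
      left_inv := by
        rintro ⟨v, hv⟩
        apply Subtype.ext
        funext i
        fin_cases i <;> simp
      right_inv := by
        rintro ⟨⟨⟨a, b⟩, hab⟩, ⟨c, e⟩⟩
        simp }
  rw [Nat.card_congr e, Nat.card_prod, Nat.card_prod, sq]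
  simp [Nat.card_eq_fintype_card]

lemma aux_split (β : Type*) [Finite β] [Zero β] (Q : β → Prop) (h0 : Q 0) :
    Nat.card {v : β // Q v} = 1 + Nat.card {v : β // Q v ∧ v ≠ 0} := by
  classical
  set α := {v : β // Q v} with hα
  have hsplit : Nat.card α
      = Nat.card {s : α // s.1 = 0} + Nat.card {s : α // ¬ s.1 = 0} := by
    rw [← Nat.card_sum]
    exact (Nat.card_congr (Equiv.sumCompl (fun s : α => s.1 = 0))).symm
  have hzero : Nat.card {s : α // s.1 = 0} = 1 := by
    rw [Nat.card_eq_one_iff_unique]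
    refine ⟨⟨?_⟩, ⟨⟨⟨0, h0⟩, rfl⟩⟩⟩
    rintro ⟨⟨a, ha⟩, h1⟩ ⟨⟨b, hb⟩, h2⟩
    simp only at h1 h2
    subst h1; subst h2
    rfl
  have hne : Nat.card {s : α // ¬ s.1 = 0} = Nat.card {v : β // Q v ∧ v ≠ 0} := by
    apply Nat.card_congr
    exact { toFun := fun s => ⟨s.1.1, s.1.2, s.2⟩
            invFun := fun v => ⟨⟨v.1, v.2.1⟩, v.2.2⟩
            left_inv := fun s => rfl
            right_inv := fun v => rfl }
  rw [hsplit, hzero, hne]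

/-- Over a finite field of characteristic 3, writing `2d+1 = g·3^t` with `3 ∤ g` and
`s' = gcd(g, q−1)`, the surface
`(x_0+x_1)(x_0^2−x_0x_1+x_1^2)^d + (x_2+x_3)(x_2^2−x_2x_3+x_3^2)^d = 0` in `P^3`
has exactly `s'·q^2 + q + 1` rational points. -/
theorem stmt_8 (F : Type*) [Field F] [Fintype F] [CharP F 3] (d g t : ℕ) (hd : 1 ≤ d)
    (hfact : 2 * d + 1 = g * 3 ^ t) (hg : ¬ (3 ∣ g)) :
    Nat.card {x : Projectivization F (Fin 4 → F) //
        (x.rep 0 + x.rep 1) * (x.rep 0 ^ 2 - x.rep 0 * x.rep 1 + x.rep 1 ^ 2) ^ d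
          + (x.rep 2 + x.rep 3) * (x.rep 2 ^ 2 - x.rep 2 * x.rep 3 + x.rep 3 ^ 2) ^ d = 0}
      = Nat.gcd g (Fintype.card F - 1) * Fintype.card F ^ 2 + Fintype.card F + 1 := by
  classical
  have hq2 : 2 ≤ Fintype.card F := Fintype.one_lt_card
  have hg1 : 0 < g := by
    rcases Nat.eq_zero_or_pos g with h | h
    · rw [h, zero_mul] at hfact; omega
    · exact h
  have godd : Odd g := by
    have : Odd (g * 3 ^ t) := hfact ▸ odd_two_mul_add_one d
    exact (Nat.odd_mul.mp this).1
  set P : (Fin 4 → F) → Prop := fun v => (v 0 + v 1) ^ g + (v 2 + v 3) ^ g = 0 with hP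
  have step1 : Nat.card {x : Projectivization F (Fin 4 → F) //
        (x.rep 0 + x.rep 1) * (x.rep 0 ^ 2 - x.rep 0 * x.rep 1 + x.rep 1 ^ 2) ^ d
          + (x.rep 2 + x.rep 3) * (x.rep 2 ^ 2 - x.rep 2 * x.rep 3 + x.rep 3 ^ 2) ^ d = 0}
      = Nat.card {x : ℙ F (Fin 4 → F) // P x.rep} :=
    Nat.card_congr (Equiv.subtypeEquivRight fun x =>
      aux_eqn F d g t hfact (x.rep 0) (x.rep 1) (x.rep 2) (x.rep 3))
  have hinv : ∀ (c : F), c ≠ 0 → ∀ v, P (c • v) ↔ P v := by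
    intro c hc v
    simp only [hP, Pi.smul_apply, smul_eq_mul]
    rw [← mul_add, ← mul_add, mul_pow, mul_pow, ← mul_add ((c : F) ^ g), mul_eq_zero]
    simp [pow_ne_zero _ hc]
  have hfiber := aux_proj F P hinv
  have hvec := aux_vec F g
  have hP0 : P 0 := by simp [hP, zero_pow hg1.ne']
  have hsplit := aux_split (Fin 4 → F) P hP0
  have hpairs := aux_pairs F hg1 godd
  rw [step1]
  have key : (1 + (Fintype.card F - 1) * Nat.gcd g (Fintype.card F - 1)) * Fintype.card F ^ 2
      = 1 + Nat.card {x : ℙ F (Fin 4 → F) // P x.rep} * (Fintype.card F - 1) := by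
    rw [← hpairs, ← hvec, hsplit, hfiber]
  have hex : ∃ k, Fintype.card F = k + 2 := ⟨Fintype.card F - 2, (Nat.sub_add_cancel hq2).symm⟩
  obtain ⟨k, hk⟩ := hex
  rw [hk] at key ⊢
  have hk1 : k + 2 - 1 = k + 1 := rfl
  rw [hk1] at key ⊢
  have key2 : (1 + (k + 1) * Nat.gcd g (k + 1)) * (k + 2) ^ 2
      = 1 + (Nat.gcd g (k + 1) * (k + 2) ^ 2 + (k + 2) + 1) * (k + 1) := by ring
  rw [key2] at key
  exact (Nat.eq_of_mul_eq_mul_right (Nat.succ_pos k) (Nat.add_left_cancel key)).symm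
end
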